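/- arXiv:2401.14927 — 2 statements merged into one kernel-verified Lean document; each statement's English description precedes it below -/
import Mathlib

section
/- In an Eulerian digraph D, the number of oriented spanning trees (spanning trees in which every non-root vertex has a unique directed path to the root) rooted at a fixed vertex r equals the number of oriented spanning trees of the transpose digraph D^T (obtained by reversing all edge orientations) rooted at r. -/
open Classical

/-- A finite multidigraph: finite vertex and edge types with initial and final
vertex maps. -/
structure Multidigraph where
  V : Type
  E : Type
  [fintV : Fintype V]
  [fintE : Fintype E]
  first : E → V
  last : E → V

attribute [instance] Multidigraph.fintV Multidigraph.fintE

namespace Multidigraph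

variable (D : Multidigraph)

/-- The out-degree of a vertex. -/
noncomputable def outdeg (v : D.V) : ℕ := Nat.card {e : D.E // D.first e = v}

/-- The in-degree of a vertex. -/
noncomputable def indeg (v : D.V) : ℕ := Nat.card {e : D.E // D.last e = v}

/-- Undirected adjacency using only edges in `T`. -/
def Adj (T : Set D.E) (a b : D.V) : Prop :=
  ∃ e ∈ T, (D.first e = a ∧ D.last e = b) ∨ (D.first e = b ∧ D.last e = a)

/-- Undirected reachability using only edges in `T`. -/
def Reach (T : Set D.E) : D.V → D.V → Prop := Relation.ReflTransGen (D.Adj T)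

/-- The underlying undirected graph is connected. -/
def Connected : Prop := ∀ a b : D.V, D.Reach Set.univ a b

/-- An Eulerian digraph: connected and with in-degree equal to out-degree at
every vertex. -/
def Eulerian : Prop := D.Connected ∧ ∀ v : D.V, D.indeg v = D.outdeg v

/-- `T` is a spanning tree of the underlying undirected graph: it connects all
vertices and has `|V| - 1` edges. -/
def IsSpanningTree (T : Set D.E) : Prop :=
  (∀ a b : D.V, D.Reach T a b) ∧ Nat.card T = Nat.card D.V - 1

/-- The out-degree of `v` in the subgraph `T` after reversing the orientations
of the edges in `S`. -/
noncomputable def outdegRev (T S : Set D.E) (v : D.V) : ℕ :=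
  Nat.card {e : D.E // (e ∈ T \ S ∧ D.first e = v) ∨ (e ∈ S ∧ D.last e = v)}

/-- `T` becomes an oriented spanning tree rooted at `r` (every vertex has a
unique directed path to `r`, i.e. every non-root vertex has out-degree `1` and
the root has out-degree `0` in the tree) after reversing exactly the edges of
`S ⊆ T`. -/
def IsOrientedSpanningTreeRev (T S : Set D.E) (r : D.V) : Prop :=
  D.IsSpanningTree T ∧ S ⊆ T ∧ (∀ v : D.V, v ≠ r → D.outdegRev T S v = 1) ∧
    D.outdegRev T S r = 0

/-- `T` is an oriented spanning tree rooted at `r`: every vertex has a unique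
directed path to `r`. -/
def IsOrientedSpanningTree (T : Set D.E) (r : D.V) : Prop :=
  D.IsOrientedSpanningTreeRev T ∅ r

/-- `T` is a `k`-spanning tree rooted at `r`: reversing the orientation of
exactly `k` of its edges yields an oriented spanning tree rooted at `r`. -/
def IsKSpanningTree (T : Set D.E) (r : D.V) (k : ℕ) : Prop :=
  ∃ S : Set D.E, Nat.card S = k ∧ D.IsOrientedSpanningTreeRev T S r

/-- `c D k r` is the number of `k`-spanning trees of `D` rooted at `r`. -/
noncomputable def c (k : ℕ) (r : D.V) : ℕ :=
  Nat.card {T : Set D.E // D.IsKSpanningTree T r k}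

/-- The transpose digraph: every edge reversed. -/
def transpose : Multidigraph := { D with first := D.last, last := D.first }

end Multidigraph

/-!
Directed matrix-tree theorem plus a transposition. Let `L` be the out-Laplacian of `D` with the
row and column of `r` deleted, so `L u v = outdeg u • [u = v] - #(edges u → v)`. Row `u` of `L`
is the sum of the incidence rows of the edges leaving `u`, so by multilinearity `det L` is a sum,
over all choices `p` of one out-edge per non-root vertex, of `det (1 - N)`, where `N` is the
adjacency matrix of the map `f` sending each vertex to the head of its chosen edge. If iterating
`f` leads every vertex to `r`, then `N` is nilpotent and the term is `1`; otherwise the indicator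
of the vertices that never reach `r` is a kernel vector and the term is `0`. The choices of the
first kind are exactly the oriented spanning trees rooted at `r`, so their number is `det L`.

For `Dᵀ` the same matrix is built from in-degrees instead of out-degrees and the edges
`v → u` instead of `u → v`; when `D` is balanced it is therefore `Lᵀ`, which has the same
determinant.
-/

open Polynomial in
theorem Matrix.det_one_sub_of_isNilpotent {n R : Type*} [Fintype n] [DecidableEq n] [CommRing R]
    [IsDomain R] {M : Matrix n n R} (hM : IsNilpotent M) : (1 - M).det = 1 := by
  -- `det (1 - X • M)` is a unit of `R[X]`, hence a constant, and its constant term is `1`.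
  obtain ⟨c, -, hc⟩ := Polynomial.isUnit_iff.1 (isUnit_charpolyRev_of_isNilpotent hM)
  have hc1 : c = 1 := by simpa [← hc] using eval_charpolyRev (M := M)
  have heval : (1 - M).det = M.charpolyRev.eval 1 := by
    rw [charpolyRev, ← coe_evalRingHom, RingHom.map_det]
    congr
    ext i j
    by_cases hij : i = j <;> simp [hij]
  rw [heval, ← hc, hc1, eval_C]

namespace Function

variable {α : Type*} {g : α → α} {r : α}

lemma exists_iterate_apply_eq_iff {v : α} (hv : v ≠ r) :
    (∃ k, g^[k] (g v) = r) ↔ ∃ k, g^[k] v = r := by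
  constructor
  · rintro ⟨k, hk⟩
    exact ⟨k + 1, hk⟩
  · rintro ⟨_ | k, hk⟩
    · exact absurd hk hv
    · exact ⟨k, hk⟩

variable [Fintype α]

variable (g r) in
noncomputable def succMatrix : Matrix {v // v ≠ r} {v // v ≠ r} ℤ :=
  Matrix.of fun u v => if g u = v then 1 else 0

lemma succMatrix_pow_apply (hr : g r = r) (k : ℕ) (u v : {v // v ≠ r}) :
    (succMatrix g r ^ k) u v = if g^[k] u = v then 1 else 0 := by
  induction k generalizing v with
  | zero =>
    by_cases h : u = v
    · simp [h]
    · simp [h, Subtype.coe_injective.ne h]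
  | succ k ih =>
    have hterm : ∀ w, (succMatrix g r ^ k) u w * succMatrix g r w v =
        if g^[k] u = w then (if g w = v then 1 else 0) else 0 := by
      intro w
      rw [ih, succMatrix, Matrix.of_apply, ite_mul, one_mul, zero_mul]
    rw [pow_succ, Matrix.mul_apply, Finset.sum_congr rfl fun w _ => hterm w,
      iterate_succ_apply']
    by_cases hk : g^[k] u = r
    · rw [hk, hr, if_neg (Ne.symm v.2)]
      exact Finset.sum_eq_zero fun w _ => if_neg fun h => w.2 h.symm
    · rw [Finset.sum_eq_single (⟨g^[k] u, hk⟩ : {v // v ≠ r})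
        (fun w _ hw => if_neg fun h => hw (Subtype.ext h.symm)) (by simp), if_pos rfl]

lemma isNilpotent_succMatrix (hr : g r = r) (h : ∀ v, ∃ k, g^[k] v = r) :
    IsNilpotent (succMatrix g r) := by
  choose k hk using h
  refine ⟨∑ v, k v, ?_⟩
  ext u v
  have hroot : g^[∑ v, k v] u = r := by
    rw [← Nat.sub_add_cancel (Finset.single_le_sum (fun v _ => Nat.zero_le (k v))
      (Finset.mem_univ u.1)), iterate_add_apply, hk, iterate_fixed hr]
  rw [succMatrix_pow_apply hr, hroot, if_neg (Ne.symm v.2), Matrix.zero_apply]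

lemma det_one_sub_succMatrix_of_not_forall (h : ¬ ∀ v, ∃ k, g^[k] v = r) :
    (1 - succMatrix g r).det = 0 := by
  push Not at h
  obtain ⟨v₀, hv₀⟩ := h
  -- Away from `r`, `u` reaches `r` iff `g u` does, so `y` is a fixed vector of `succMatrix g r`.
  set y : {v // v ≠ r} → ℤ := fun u => if ∃ k, g^[k] u = r then 0 else 1
  refine Matrix.exists_mulVec_eq_zero_iff.1 ⟨y, fun hy => ?_, ?_⟩
  · have := congrFun hy ⟨v₀, by simpa using hv₀ 0⟩
    simp [y, hv₀] at this
  · ext u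
    rw [Matrix.sub_mulVec, Matrix.one_mulVec, Pi.sub_apply, Pi.zero_apply, sub_eq_zero,
      Matrix.mulVec, dotProduct]
    simp only [succMatrix, Matrix.of_apply, ite_mul, one_mul, zero_mul]
    by_cases hu : g u = r
    · rw [Finset.sum_eq_zero fun w _ => if_neg fun h => w.2 (h ▸ hu)]
      simp only [y, if_pos (⟨1, hu⟩ : ∃ k, g^[k] u = r)]
    · rw [Finset.sum_eq_single (⟨g u, hu⟩ : {v // v ≠ r})
        (fun w _ hw => if_neg fun h => hw (Subtype.ext h.symm)) (by simp), if_pos rfl]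
      simp only [y, exists_iterate_apply_eq_iff u.2]

lemma det_one_sub_succMatrix (hr : g r = r) :
    (1 - succMatrix g r).det = if ∀ v, ∃ k, g^[k] v = r then 1 else 0 := by
  split_ifs with h
  · exact Matrix.det_one_sub_of_isNilpotent (isNilpotent_succMatrix hr h)
  · exact det_one_sub_succMatrix_of_not_forall h

end Function

namespace Multidigraph

open Finset Matrix Function

variable (D : Multidigraph) (r : D.V)

noncomputable def incidence (e : D.E) : {v // v ≠ r} → ℤ :=
  fun v => (if D.first e = v then 1 else 0) - (if D.last e = v then 1 else 0)

noncomputable def reducedLaplacian : Matrix {v // v ≠ r} {v // v ≠ r} ℤ :=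
  Matrix.of fun u => ∑ e with D.first e = u, D.incidence r e

lemma outdeg_eq_card (v : D.V) : D.outdeg v = #{e | D.first e = v} := by
  rw [outdeg, Nat.card_eq_fintype_card, Fintype.card_subtype]

lemma reducedLaplacian_apply (u v : {v // v ≠ r}) :
    D.reducedLaplacian r u v =
      (if u = v then (D.outdeg u : ℤ) else 0) - #{e | D.first e = u ∧ D.last e = v} := by
  simp only [reducedLaplacian, of_apply, Finset.sum_apply, incidence, sum_sub_distrib]
  rw [sum_boole, sum_boole, filter_filter, filter_filter]
  congr 1
  by_cases h : u = v
  · simp [h, outdeg_eq_card]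
  · have : ∀ e, ¬ (D.first e = u ∧ D.first e = v) := fun e he =>
      Subtype.coe_injective.ne h (he.1.symm.trans he.2)
    simp [h, this]

lemma reducedLaplacian_transpose (hbal : ∀ v, D.indeg v = D.outdeg v) :
    D.transpose.reducedLaplacian r = (D.reducedLaplacian r)ᵀ := by
  refine Matrix.ext fun (u v : {v : D.V // v ≠ r}) => ?_
  refine (D.transpose.reducedLaplacian_apply r u v).trans
    ((Eq.trans ?_ (D.reducedLaplacian_apply r v u).symm))
  change (if u = v then (D.indeg u : ℤ) else 0) - #{e | D.last e = u ∧ D.first e = v} = _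
  by_cases h : u = v
  · subst h
    simp [hbal, and_comm]
  · simp [h, Ne.symm h, and_comm]

noncomputable def follow (p : {v // v ≠ r} → D.E) (v : D.V) : D.V :=
  if h : v = r then r else D.last (p ⟨v, h⟩)

def IsArborescenceChoice (p : {v // v ≠ r} → D.E) : Prop :=
  (∀ u, D.first (p u) = u) ∧ ∀ v, ∃ k, (D.follow r p)^[k] v = r

lemma outdegRev_empty (T : Set D.E) (v : D.V) :
    D.outdegRev T ∅ v = Nat.card {e // e ∈ T ∧ D.first e = v} := by
  simp [outdegRev]

variable {D r}

lemma follow_root (p : {v // v ≠ r} → D.E) : D.follow r p r = r := dif_pos rfl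

lemma follow_of_ne (p : {v // v ≠ r} → D.E) (u : {v // v ≠ r}) :
    D.follow r p u = D.last (p u) := dif_neg u.2

lemma incidence_eq_row {p : {v // v ≠ r} → D.E} (hp : ∀ u, D.first (p u) = u)
    (u : {v // v ≠ r}) : D.incidence r (p u) = (1 - succMatrix (D.follow r p) r) u := by
  ext v
  simp [incidence, succMatrix, hp, follow_of_ne, one_apply, Subtype.ext_iff]

variable (D r) in
theorem det_reducedLaplacian :
    (D.reducedLaplacian r).det = #{p | D.IsArborescenceChoice r p} := by
  have hexpand : (D.reducedLaplacian r).det =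
      ∑ p ∈ Fintype.piFinset fun u : {v // v ≠ r} => ({e | D.first e = u} : Finset D.E),
        (Matrix.of fun u => D.incidence r (p u)).det :=
    detRowAlternating.toMultilinearMap.map_sum_finset (fun _ e => D.incidence r e) _
  have hterm : ∀ p ∈ Fintype.piFinset fun u : {v // v ≠ r} => ({e | D.first e = u} : Finset D.E),
      (Matrix.of fun u => D.incidence r (p u)).det =
        if ∀ v, ∃ k, (D.follow r p)^[k] v = r then 1 else 0 := by
    intro p hp
    rw [← det_one_sub_succMatrix (follow_root p)]
    congr 1
    ext u v
    exact congrFun (incidence_eq_row (by simpa using hp) u) v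
  rw [hexpand, sum_congr rfl hterm, sum_boole]
  congr 2
  ext p
  simp [IsArborescenceChoice]

lemma reach_symm {T : Set D.E} {a b : D.V} (h : D.Reach T a b) : D.Reach T b a := by
  have : Std.Symm (D.Adj T) := ⟨fun _ _ ⟨e, he, h⟩ => ⟨e, he, h.symm⟩⟩
  exact Std.Symm.symm (r := Relation.ReflTransGen (D.Adj T)) _ _ h

section Choice

variable {p : {v // v ≠ r} → D.E}

lemma reach_follow (hp : ∀ u, D.first (p u) = u) (v : D.V) :
    D.Reach (Set.range p) v (D.follow r p v) := by
  by_cases hv : v = r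
  · rw [hv, follow_root]
    exact .refl
  · exact .single ⟨p ⟨v, hv⟩, ⟨_, rfl⟩, .inl ⟨hp _, (follow_of_ne p ⟨v, hv⟩).symm⟩⟩

lemma reach_iterate_follow (hp : ∀ u, D.first (p u) = u) (k : ℕ) (v : D.V) :
    D.Reach (Set.range p) v ((D.follow r p)^[k] v) := by
  induction k generalizing v with
  | zero => exact .refl
  | succ k ih => exact (reach_follow hp v).trans (ih _)

lemma exists_iterate_follow_iff_of_reach (hp : ∀ u, D.first (p u) = u) {a b : D.V}
    (h : D.Reach (Set.range p) a b) :
    (∃ k, (D.follow r p)^[k] a = r) ↔ ∃ k, (D.follow r p)^[k] b = r := by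
  induction h with
  | refl => rfl
  | tail _ hbc ih =>
    refine ih.trans ?_
    obtain ⟨_, ⟨u, rfl⟩, hends⟩ := hbc
    have key := exists_iterate_apply_eq_iff (g := D.follow r p) u.2
    rw [hp, ← follow_of_ne] at hends
    rcases hends with ⟨rfl, rfl⟩ | ⟨rfl, rfl⟩
    exacts [key.symm, key]

lemma forall_reach_range_iff (hp : ∀ u, D.first (p u) = u) :
    (∀ a b, D.Reach (Set.range p) a b) ↔ ∀ v, ∃ k, (D.follow r p)^[k] v = r := by
  refine ⟨fun h v => (exists_iterate_follow_iff_of_reach hp (h v r)).2 ⟨0, rfl⟩, fun h a b => ?_⟩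
  obtain ⟨ka, ha⟩ := h a
  obtain ⟨kb, hb⟩ := h b
  have hra := reach_iterate_follow hp ka a
  have hrb := reach_iterate_follow hp kb b
  rw [ha] at hra
  rw [hb] at hrb
  exact hra.trans (reach_symm hrb)

lemma outdegRev_range (hp : ∀ u, D.first (p u) = u) (v : D.V) :
    D.outdegRev (Set.range p) ∅ v = if v = r then 0 else 1 := by
  rw [outdegRev_empty]
  split_ifs with hv
  · rw [Finite.card_eq_zero_iff]
    exact ⟨fun ⟨_, ⟨u, rfl⟩, hu⟩ => u.2 ((hp u).symm.trans (hu.trans hv))⟩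
  · rw [Nat.card_eq_one_iff_exists]
    refine ⟨⟨p ⟨v, hv⟩, ⟨_, rfl⟩, hp _⟩, fun ⟨_, ⟨u, rfl⟩, hu⟩ => ?_⟩
    obtain rfl : u = ⟨v, hv⟩ := Subtype.ext ((hp u).symm.trans hu)
    rfl

lemma injective_of_first_eq (hp : ∀ u, D.first (p u) = u) : Injective p :=
  fun u w h => Subtype.ext ((hp u).symm.trans (h ▸ hp w))

lemma card_range_of_first_eq (hp : ∀ u, D.first (p u) = u) :
    Nat.card (Set.range p) = Nat.card D.V - 1 := by
  rw [Nat.card_range_of_injective (injective_of_first_eq hp), Nat.card_eq_fintype_card,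
    Nat.card_eq_fintype_card, ← Set.card_ne_eq r]
  rfl

lemma isOrientedSpanningTree_range_iff (hp : ∀ u, D.first (p u) = u) :
    D.IsOrientedSpanningTree (Set.range p) r ↔ ∀ v, ∃ k, (D.follow r p)^[k] v = r := by
  simp only [IsOrientedSpanningTree, IsOrientedSpanningTreeRev, IsSpanningTree,
    forall_reach_range_iff hp, card_range_of_first_eq hp, outdegRev_range hp]
  simp

end Choice

lemma eq_of_range_eq {p q : {v // v ≠ r} → D.E} (hp : ∀ u, D.first (p u) = u)
    (hq : ∀ u, D.first (q u) = u) (h : Set.range p = Set.range q) : p = q := by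
  funext u
  obtain ⟨w, hw⟩ : p u ∈ Set.range q := h ▸ Set.mem_range_self u
  obtain rfl : w = u := Subtype.ext ((hq w).symm.trans (hw ▸ hp u))
  exact hw.symm

lemma exists_range_eq_of_isOrientedSpanningTree {T : Set D.E}
    (hT : D.IsOrientedSpanningTree T r) :
    ∃ p : {v // v ≠ r} → D.E, (∀ u, D.first (p u) = u) ∧ Set.range p = T := by
  obtain ⟨-, -, hout, hroot⟩ := hT
  simp only [outdegRev_empty, Nat.card_eq_one_iff_exists, Finite.card_eq_zero_iff] at hout hroot
  have hunique (u : {v // v ≠ r}) := hout u u.2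
  choose p hp using hunique
  refine ⟨fun u => p u, fun u => (p u).2.2, Set.Subset.antisymm ?_ fun e he => ?_⟩
  · rintro _ ⟨u, rfl⟩
    exact (p u).2.1
  · have hr : D.first e ≠ r := fun h => hroot.false ⟨e, he, h⟩
    exact ⟨⟨D.first e, hr⟩, congrArg Subtype.val (hp _ ⟨e, he, rfl⟩).symm⟩

variable (D r)

lemma card_isOrientedSpanningTree :
    Nat.card {T // D.IsOrientedSpanningTree T r} = #{p | D.IsArborescenceChoice r p} := by
  rw [← Fintype.card_subtype, ← Nat.card_eq_fintype_card]
  refine (Nat.card_congr (Equiv.ofBijective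
    (fun p => ⟨Set.range p.1, (isOrientedSpanningTree_range_iff p.2.1).2 p.2.2⟩) ⟨?_, ?_⟩)).symm
  · exact fun p q h => Subtype.ext (eq_of_range_eq p.2.1 q.2.1 (congrArg Subtype.val h))
  · rintro ⟨T, hT⟩
    obtain ⟨p, hp, rfl⟩ := exists_range_eq_of_isOrientedSpanningTree hT
    exact ⟨⟨p, hp, (isOrientedSpanningTree_range_iff hp).1 hT⟩, rfl⟩

theorem natCast_card_isOrientedSpanningTree :
    (Nat.card {T // D.IsOrientedSpanningTree T r} : ℤ) = (D.reducedLaplacian r).det := by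
  rw [card_isOrientedSpanningTree, det_reducedLaplacian]

end Multidigraph

/-- In an Eulerian digraph `D`, the number of oriented spanning
trees rooted at a fixed vertex `r` equals the number of oriented spanning
trees of the transpose digraph `Dᵀ` rooted at `r`. -/
theorem stmt0 (D : Multidigraph) (hD : D.Eulerian) (r : D.V) :
    Nat.card {T : Set D.E // D.IsOrientedSpanningTree T r} =
      Nat.card {T : Set D.transpose.E // D.transpose.IsOrientedSpanningTree T r} := by
  apply Nat.cast_injective (R := ℤ)
  calc _ = (D.reducedLaplacian r).det := D.natCast_card_isOrientedSpanningTree r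
    _ = (D.reducedLaplacian r).transpose.det := (Matrix.det_transpose _).symm
    _ = (D.transpose.reducedLaplacian r).det :=
      congrArg Matrix.det (D.reducedLaplacian_transpose r hD.2).symm
    _ = _ := (D.transpose.natCast_card_isOrientedSpanningTree r).symm
end

section
/- Let D be an Eulerian digraph, r a vertex, and k a natural number. A k-spanning tree rooted at r is a spanning tree of D such that reversing the orientation of exactly k of its edges yields an oriented spanning tree rooted at r. Then the number c_k(D,r) of k-spanning trees rooted at r satisfies c_k(D,r) = sum over i from 0 to k of (-1)^i times the sum over cycle-free edge subsets E' of D with |E'| = k - i of binom(|V(D)| - 1 - (k-i), i) times c_0(D/E', r), where D/E' denotes the digraph obtained by contracting the edges of E'. -/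
open Classical

namespace Multidigraph

variable (D : Multidigraph)

/-- A set of edges is cycle-free if no edge connects two vertices that are
already connected by the remaining edges of the set (no undirected cycles). -/
def CycleFree (E' : Set D.E) : Prop :=
  ∀ e ∈ E', ¬ D.Reach (E' \ {e}) (D.first e) (D.last e)

/-- The relation on vertices induced by the contracted edges. -/
def contractRel (E' : Set D.E) (a b : D.V) : Prop :=
  ∃ e ∈ E', D.first e = a ∧ D.last e = b

/-- The contraction `D/E'`: vertices are identified along the edges of `E'`,
and the edges of `E'` are removed. -/
noncomputable def contract (E' : Set D.E) : Multidigraph where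
  V := Quotient (Relation.EqvGen.setoid (D.contractRel E'))
  E := {e : D.E // e ∉ E'}
  fintV := Fintype.ofFinite _
  fintE := Fintype.ofFinite _
  first e := Quotient.mk _ (D.first e.1)
  last e := Quotient.mk _ (D.last e.1)

end Multidigraph

/-!
An orientation of a spanning tree `T` towards `r` is unique: the reversed edges must be exactly
the edges whose last vertex is cut off from `r` once the edge is removed (`reversedEdges T r`).
Hence `c_k(D, r)` counts the spanning trees `T` with `w_T := |reversedEdges T r| = k`.

For a cycle-free `E'`, the spanning trees of `D/E'` are the images of the spanning trees
`T ⊇ E'` of `D`, and reachability in `D/E'` is reachability in `D` modulo `E'`; so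
`c_0(D/E', r)` counts the spanning trees `T ⊇ E'` with `reversedEdges T r ⊆ E'`. Summing over
the cycle-free `E'` with `|E'| = j` therefore counts the pairs `reversedEdges T r ⊆ E' ⊆ T`,
giving `∑_T binom(N - w_T, j - w_T)` with `N = |V(D)| - 1`. In the alternating sum of the
theorem each tree then contributes
`∑_i (-1)^i binom(N - k + i, i) binom(N - w_T, k - i - w_T)
  = binom(N - w_T, k - w_T) ∑_i (-1)^i binom(k - w_T, i) = [w_T = k]`.
-/

lemma Function.exists_iterate_eq_iff_of_apply_eq {α : Type*} {f : α → α} {x y t : α}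
    (hxy : f x = y) (hx : x ≠ t) : (∃ n, f^[n] x = t) ↔ ∃ n, f^[n] y = t := by
  refine ⟨fun ⟨n, hn⟩ => ?_,
    fun ⟨n, hn⟩ => ⟨n + 1, by rwa [Function.iterate_succ_apply, hxy]⟩⟩
  cases n with
  | zero => exact absurd hn hx
  | succ n => exact ⟨n, by rwa [Function.iterate_succ_apply, hxy] at hn⟩

lemma Nat.card_subtype_eq_sum_ite {α : Type*} [Fintype α] (p : α → Prop) [DecidablePred p] :
    Nat.card {x // p x} = ∑ x, if p x then 1 else 0 := by
  simp [Nat.card_eq_fintype_card, Fintype.card_subtype]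

lemma Set.ncard_setOf_between_ncard_eq {α : Type*} {A B : Set α} (hB : B.Finite) (hAB : A ⊆ B)
    (j : ℕ) : {C | A ⊆ C ∧ C ⊆ B ∧ C.ncard = j}.ncard =
      if A.ncard ≤ j then (B.ncard - A.ncard).choose (j - A.ncard) else 0 := by
  have hA : A.Finite := hB.subset hAB
  split_ifs with hj
  · have hdisj : ∀ {t}, t ⊆ B \ A → Disjoint A t := fun ht =>
      Set.disjoint_left.mpr fun _ hx hxt => (ht hxt).2 hx
    have himage : {C | A ⊆ C ∧ C ⊆ B ∧ C.ncard = j} =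
        (A ∪ ·) '' {t | t ⊆ B \ A ∧ t.ncard = j - A.ncard} := by
      ext C
      refine ⟨fun ⟨hAC, hCB, hC⟩ => ⟨C \ A, ⟨Set.sdiff_subset_sdiff_left hCB, ?_⟩,
        Set.union_sdiff_cancel hAC⟩, ?_⟩
      · rw [Set.ncard_sdiff hAC hA, hC]
      · rintro ⟨t, ⟨htB, ht⟩, rfl⟩
        refine ⟨Set.subset_union_left, Set.union_subset hAB fun x hx => (htB hx).1, ?_⟩
        rw [Set.ncard_union_eq (hdisj htB) hA (hB.sdiff.subset htB), ht]
        omega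
    rw [himage, Set.InjOn.ncard_image, Set.ncard_powerset_ncard hB.sdiff, Set.ncard_sdiff hAB hA]
    intro t ht t' ht' h
    rw [← Set.union_sdiff_cancel_left (Set.disjoint_iff.mp (hdisj ht.1)),
      ← Set.union_sdiff_cancel_left (Set.disjoint_iff.mp (hdisj ht'.1))]
    exact congrArg (· \ A) h
  · refine (Set.ncard_eq_zero (hB.powerset.subset fun C hC => hC.2.1)).mpr
      (Set.eq_empty_of_forall_notMem fun C ⟨hAC, hCB, hC⟩ => hj ?_)
    exact hC ▸ Set.ncard_le_ncard hAC (hB.subset hCB)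

lemma Nat.choose_sub_mul_choose_eq {N k w i : ℕ} (hkN : k ≤ N) (hik : i ≤ k)
    (hi : w ≤ k - i) :
    (N - (k - i)).choose i * (N - w).choose (k - i - w) =
      (N - w).choose (k - w) * (k - w).choose i := by
  have h := Nat.choose_mul (n := N - w) (k := k - w) (s := k - w - i) (by omega)
  rw [Nat.choose_symm (by omega : i ≤ k - w), show N - w - (k - w - i) = N - (k - i) by omega,
    show k - w - (k - w - i) = i by omega, show k - w - i = k - i - w by omega] at h
  rw [h, mul_comm]

lemma Int.alternating_sum_choose_mul_choose {N w : ℕ} (hw : w ≤ N) (k : ℕ) :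
    ∑ i ∈ Finset.range (k + 1), (-1 : ℤ) ^ i * ((N - (k - i)).choose i : ℤ) *
      (if w ≤ k - i then ((N - w).choose (k - i - w) : ℤ) else 0) = if w = k then 1 else 0 := by
  rcases lt_or_ge k w with hkw | hwk
  · rw [if_neg hkw.ne']
    exact Finset.sum_eq_zero fun i _ => by rw [if_neg (by omega), mul_zero]
  by_cases hkN : k ≤ N
  · have hterm : ∀ i ∈ Finset.range (k + 1), (-1 : ℤ) ^ i * ((N - (k - i)).choose i : ℤ) *
        (if w ≤ k - i then ((N - w).choose (k - i - w) : ℤ) else 0) =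
        ((N - w).choose (k - w) : ℤ) * ((-1) ^ i * ((k - w).choose i : ℤ)) := by
      intro i hik
      split_ifs with hi
      · rw [mul_assoc, ← Nat.cast_mul,
          Nat.choose_sub_mul_choose_eq hkN (Nat.lt_succ_iff.mp (Finset.mem_range.mp hik)) hi,
          Nat.cast_mul]
        ring
      · rw [Nat.choose_eq_zero_of_lt (by omega : k - w < i)]
        ring
    rw [Finset.sum_congr rfl hterm, ← Finset.mul_sum]
    rcases Nat.eq_zero_or_pos (k - w) with ht | ht
    · rw [ht, if_pos (by omega), Finset.sum_range_succ']
      simp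
    · obtain ⟨t, ht'⟩ := Nat.exists_eq_add_one_of_ne_zero ht.ne'
      rw [ht', Int.alternating_sum_range_choose_eq_choose,
        Nat.choose_eq_zero_of_lt (by omega : t < k), if_neg (by omega)]
      simp
  · rw [if_neg (by omega)]
    refine Finset.sum_eq_zero fun i _ => ?_
    split_ifs with hi
    · by_cases hkiN : k - i ≤ N
      · rw [Nat.choose_eq_zero_of_lt (by omega : N - (k - i) < i)]
        simp
      · rw [Nat.choose_eq_zero_of_lt (by omega : N - w < k - i - w)]
        simp
    · exact mul_zero _

namespace Multidigraph

variable {D : Multidigraph}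

section Reach

variable {U W : Set D.E} {a b c v : D.V} {e : D.E}

lemma Adj.symm (h : D.Adj U a b) : D.Adj U b a := by
  obtain ⟨e, he, h⟩ := h
  exact ⟨e, he, h.symm⟩

lemma Adj.mono (hUW : U ⊆ W) (h : D.Adj U a b) : D.Adj W a b := by
  obtain ⟨e, he, h⟩ := h
  exact ⟨e, hUW he, h⟩

lemma Adj.reach (h : D.Adj U a b) : D.Reach U a b := Relation.ReflTransGen.single h

lemma Reach.refl (U : Set D.E) (a : D.V) : D.Reach U a a := Relation.ReflTransGen.refl

lemma Reach.trans (h : D.Reach U a b) (h' : D.Reach U b c) : D.Reach U a c :=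
  Relation.ReflTransGen.trans h h'

lemma Reach.symm (h : D.Reach U a b) : D.Reach U b a := by
  induction h with
  | refl => exact Reach.refl _ _
  | tail _ h ih => exact h.symm.reach.trans ih

lemma Reach.mono (hUW : U ⊆ W) (h : D.Reach U a b) : D.Reach W a b :=
  Relation.ReflTransGen.mono (fun _ _ => Adj.mono hUW) _ _ h

lemma reach_of_mem (he : e ∈ U) : D.Reach U (D.first e) (D.last e) :=
  Adj.reach ⟨e, he, Or.inl ⟨rfl, rfl⟩⟩

lemma reach_first_iff_reach_last (he : e ∈ U) :
    D.Reach U (D.first e) v ↔ D.Reach U (D.last e) v :=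
  ⟨(reach_of_mem he).symm.trans, (reach_of_mem he).trans⟩

lemma reach_empty_iff : D.Reach ∅ a b ↔ a = b := by
  refine ⟨fun h => ?_, fun h => h ▸ Reach.refl _ _⟩
  induction h with
  | refl => rfl
  | tail _ h => exact absurd h.choose_spec.1 (Set.notMem_empty _)

lemma Reach.iff_of_forall_mem (P : D.V → Prop) (hP : ∀ e ∈ U, P (D.first e) ↔ P (D.last e))
    (h : D.Reach U a b) : P a ↔ P b := by
  induction h with
  | refl => rfl
  | tail _ hstep ih =>
    obtain ⟨e, he, ⟨rfl, rfl⟩ | ⟨rfl, rfl⟩⟩ := hstep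
    exacts [ih.trans (hP e he), ih.trans (hP e he).symm]

lemma reach_insert_iff : D.Reach (insert e U) a b ↔ D.Reach U a b ∨
    (D.Reach U a (D.first e) ∧ D.Reach U (D.last e) b) ∨
    (D.Reach U a (D.last e) ∧ D.Reach U (D.first e) b) := by
  refine ⟨fun h => ?_, ?_⟩
  · induction h with
    | refl => exact Or.inl (Reach.refl _ _)
    | @tail m t _ hadj ih =>
      obtain ⟨e', he', hor⟩ := hadj
      rcases Set.mem_insert_iff.mp he' with rfl | he'
      · rcases hor with ⟨rfl, rfl⟩ | ⟨rfl, rfl⟩ <;>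
          rcases ih with ih | ⟨ih, -⟩ | ⟨ih, -⟩
        exacts [Or.inr (Or.inl ⟨ih, Reach.refl _ _⟩), Or.inr (Or.inl ⟨ih, Reach.refl _ _⟩),
          Or.inl ih, Or.inr (Or.inr ⟨ih, Reach.refl _ _⟩), Or.inl ih,
          Or.inr (Or.inr ⟨ih, Reach.refl _ _⟩)]
      · have hmt : D.Reach U m t := Adj.reach ⟨e', he', hor⟩
        rcases ih with ih | ⟨ih₁, ih₂⟩ | ⟨ih₁, ih₂⟩
        exacts [Or.inl (ih.trans hmt), Or.inr (Or.inl ⟨ih₁, ih₂.trans hmt⟩),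
          Or.inr (Or.inr ⟨ih₁, ih₂.trans hmt⟩)]
  · have hU : U ⊆ insert e U := Set.subset_insert e U
    have he : D.Reach (insert e U) (D.first e) (D.last e) := reach_of_mem (Set.mem_insert e U)
    rintro (h | ⟨h₁, h₂⟩ | ⟨h₁, h₂⟩)
    exacts [h.mono hU, ((h₁.mono hU).trans he).trans (h₂.mono hU),
      ((h₁.mono hU).trans he.symm).trans (h₂.mono hU)]

lemma reach_sdiff_singleton_of_reach (he : D.Reach (W \ {e}) (D.first e) (D.last e))
    (h : D.Reach W a b) : D.Reach (W \ {e}) a b := by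
  rcases reach_insert_iff.mp (h.mono (Set.subset_insert_sdiff_singleton e W)) with
    h | ⟨h₁, h₂⟩ | ⟨h₁, h₂⟩
  exacts [h, (h₁.trans he).trans h₂, (h₁.trans he.symm).trans h₂]

lemma reach_sdiff_singleton_of_not_reach (hf : ¬ D.Reach (W \ {e}) (D.first e) b)
    (hl : ¬ D.Reach (W \ {e}) (D.last e) b) (h : D.Reach W a b) : D.Reach (W \ {e}) a b := by
  rcases reach_insert_iff.mp (h.mono (Set.subset_insert_sdiff_singleton e W)) with
    h | ⟨-, h⟩ | ⟨-, h⟩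
  exacts [h, absurd h hl, absurd h hf]

lemma eqvGen_contractRel_iff : Relation.EqvGen (D.contractRel U) a b ↔ D.Reach U a b := by
  refine ⟨fun h => ?_, fun h => ?_⟩
  · induction h with
    | rel x y h => obtain ⟨e, he, rfl, rfl⟩ := h; exact reach_of_mem he
    | refl => exact Reach.refl _ _
    | symm _ _ _ ih => exact ih.symm
    | trans _ _ _ _ _ ih₁ ih₂ => exact ih₁.trans ih₂
  · induction h with
    | refl => exact Relation.EqvGen.refl a
    | tail _ hadj ih =>
      obtain ⟨e, he, ⟨rfl, rfl⟩ | ⟨rfl, rfl⟩⟩ := hadj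
      · exact ih.trans _ _ _ (Relation.EqvGen.rel _ _ ⟨e, he, rfl, rfl⟩)
      · exact ih.trans _ _ _ ((Relation.EqvGen.rel _ _ ⟨e, he, rfl, rfl⟩).symm _ _)

end Reach

section ContractVertices

variable {T U : Set D.E} {a b : D.V} {e : D.E}

abbrev toContract (U : Set D.E) (v : D.V) : (D.contract U).V := Quotient.mk _ v

lemma toContract_eq_iff : D.toContract U a = D.toContract U b ↔ D.Reach U a b :=
  Quotient.eq.trans eqvGen_contractRel_iff

lemma toContract_surjective (U : Set D.E) : Function.Surjective (D.toContract U) :=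
  Quotient.mk_surjective

lemma card_contract_empty : Nat.card (D.contract ∅).V = Nat.card D.V :=
  (Nat.card_eq_of_bijective _ ⟨fun _ _ h => reach_empty_iff.mp (toContract_eq_iff.mp h),
    toContract_surjective ∅⟩).symm

lemma card_contract_insert_of_reach (h : D.Reach U (D.first e) (D.last e)) :
    Nat.card (D.contract (insert e U)).V = Nat.card (D.contract U).V := by
  refine Nat.card_congr (Quotient.congrRight fun a b => ?_)
  change Relation.EqvGen _ a b ↔ Relation.EqvGen _ a b
  rw [eqvGen_contractRel_iff, eqvGen_contractRel_iff, reach_insert_iff]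
  refine ⟨?_, Or.inl⟩
  rintro (h' | ⟨h₁, h₂⟩ | ⟨h₁, h₂⟩)
  exacts [h', (h₁.trans h).trans h₂, (h₁.trans h.symm).trans h₂]

/-- The new edge merges the classes of its two endpoints and nothing else, so the classes of
`D/U` other than that of `first e` map bijectively onto those of `D/(insert e U)`. -/
lemma card_contract_insert_of_not_reach (h : ¬ D.Reach U (D.first e) (D.last e)) :
    Nat.card (D.contract (insert e U)).V + 1 = Nat.card (D.contract U).V := by
  have hU : U ⊆ insert e U := Set.subset_insert e U
  let π : (D.contract U).V → (D.contract (insert e U)).V :=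
    Quotient.lift (D.toContract (insert e U)) fun a b hab =>
      toContract_eq_iff.mpr ((eqvGen_contractRel_iff.mp hab).mono hU)
  let π' : {x // x ≠ D.toContract U (D.first e)} → (D.contract (insert e U)).V := fun x => π x
  have hπ' : Function.Bijective π' := by
    constructor
    · rintro ⟨x, hx⟩ ⟨y, hy⟩ hxy
      obtain ⟨a, rfl⟩ := toContract_surjective U x
      obtain ⟨b, rfl⟩ := toContract_surjective U y
      rw [Ne, toContract_eq_iff] at hx hy
      refine Subtype.ext (toContract_eq_iff.mpr ?_)
      rcases reach_insert_iff.mp (toContract_eq_iff.mp hxy) with h' | ⟨h₁, -⟩ | ⟨-, h₂⟩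
      exacts [h', absurd h₁ hx, absurd h₂.symm hy]
    · intro z
      obtain ⟨v, rfl⟩ := toContract_surjective (insert e U) z
      by_cases hv : D.Reach U v (D.first e)
      · refine ⟨⟨D.toContract U (D.last e), fun h' => h (toContract_eq_iff.mp h').symm⟩,
          ?_⟩
        exact toContract_eq_iff.mpr
          ((hv.mono hU).trans (reach_of_mem (Set.mem_insert e U))).symm
      · exact ⟨⟨D.toContract U v, fun h' => hv (toContract_eq_iff.mp h')⟩, rfl⟩
  rw [← Nat.card_eq_of_bijective π' hπ']
  have : 0 < Nat.card (D.contract U).V :=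
    Nat.card_pos_iff.mpr ⟨⟨D.toContract U (D.first e)⟩, inferInstance⟩
  simp only [Nat.card_eq_fintype_card, Fintype.card_subtype_compl, Fintype.card_unique] at this ⊢
  omega

lemma card_le_card_contract_add_ncard (U : Set D.E) :
    Nat.card D.V ≤ Nat.card (D.contract U).V + U.ncard := by
  induction U, U.toFinite using Set.Finite.induction_on with
  | empty => rw [Set.ncard_empty, card_contract_empty, add_zero]
  | @insert e U he hU ih =>
    rw [Set.ncard_insert_of_notMem he hU]
    by_cases h : D.Reach U (D.first e) (D.last e)
    · rw [card_contract_insert_of_reach h]; omega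
    · have := card_contract_insert_of_not_reach h; omega

lemma CycleFree.mono (h : D.CycleFree T) (hUT : U ⊆ T) : D.CycleFree U :=
  fun e he hre => h e (hUT he) (hre.mono (Set.sdiff_subset_sdiff_left hUT))

lemma CycleFree.card_contract_add_ncard (h : D.CycleFree U) :
    Nat.card (D.contract U).V + U.ncard = Nat.card D.V := by
  induction U, U.toFinite using Set.Finite.induction_on with
  | empty => rw [Set.ncard_empty, card_contract_empty, add_zero]
  | @insert e U he hU ih =>
    have hne : ¬ D.Reach U (D.first e) (D.last e) := by
      simpa [Set.insert_sdiff_self_of_notMem he] using h e (Set.mem_insert e U)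
    rw [Set.ncard_insert_of_notMem he hU, ← ih (h.mono (Set.subset_insert e U)),
      ← card_contract_insert_of_not_reach hne]
    ring

end ContractVertices

section SpanningTree

variable {T U : Set D.E} {v : D.V} {e : D.E}

lemma card_le_ncard_add_one_of_connected (hU : ∀ a b : D.V, D.Reach U a b) :
    Nat.card D.V ≤ U.ncard + 1 := by
  have : Nat.card (D.contract U).V ≤ 1 := Finite.card_le_one_iff_subsingleton.mpr
    ⟨fun x y => by
      obtain ⟨a, rfl⟩ := toContract_surjective U x
      obtain ⟨b, rfl⟩ := toContract_surjective U y
      exact toContract_eq_iff.mpr (hU a b)⟩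
  have := card_le_card_contract_add_ncard U
  omega

lemma IsSpanningTree.ncard_eq (hT : D.IsSpanningTree T) : T.ncard = Nat.card D.V - 1 :=
  Nat.card_coe_set_eq T ▸ hT.2

lemma IsSpanningTree.cycleFree (hT : D.IsSpanningTree T) : D.CycleFree T := by
  intro e he hre
  have := card_le_ncard_add_one_of_connected fun a b =>
    reach_sdiff_singleton_of_reach hre (hT.1 a b)
  have : 0 < Nat.card D.V := Nat.card_pos_iff.mpr ⟨⟨D.first e⟩, inferInstance⟩
  have := Set.ncard_sdiff_singleton_add_one he T.toFinite
  have := hT.ncard_eq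
  omega

lemma IsSpanningTree.reach_first_iff_not_reach_last (hT : D.IsSpanningTree T) (he : e ∈ T) :
    D.Reach (T \ {e}) (D.first e) v ↔ ¬ D.Reach (T \ {e}) (D.last e) v := by
  refine ⟨fun hf hl => hT.cycleFree e he (hf.trans hl.symm), fun hl => ?_⟩
  by_contra hf
  exact hf (reach_sdiff_singleton_of_not_reach hf hl (hT.1 _ _))

end SpanningTree

section Orientation

variable {T S : Set D.E} {r v : D.V} {e : D.E}

noncomputable def tailRev (S : Set D.E) (e : D.E) : D.V := if e ∈ S then D.last e else D.first e

noncomputable def headRev (S : Set D.E) (e : D.E) : D.V := if e ∈ S then D.first e else D.last e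

lemma tailRev_eq_or : D.tailRev S e = D.first e ∨ D.tailRev S e = D.last e := by
  unfold tailRev; split_ifs <;> simp

lemma iff_tailRev_headRev_iff (P : D.V → Prop) :
    (P (D.tailRev S e) ↔ P (D.headRev S e)) ↔ (P (D.first e) ↔ P (D.last e)) := by
  unfold tailRev headRev; split_ifs
  exacts [Iff.comm, Iff.rfl]

lemma adj_tailRev_headRev (he : e ∈ T) : D.Adj T (D.tailRev S e) (D.headRev S e) := by
  unfold tailRev headRev; split_ifs
  exacts [⟨e, he, Or.inr ⟨rfl, rfl⟩⟩, ⟨e, he, Or.inl ⟨rfl, rfl⟩⟩]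

lemma outdegRev_eq_card (hS : S ⊆ T) (v : D.V) :
    D.outdegRev T S v = Nat.card {e // e ∈ T ∧ D.tailRev S e = v} := by
  refine Nat.card_congr (Equiv.subtypeEquivRight fun e => ?_)
  unfold tailRev
  by_cases heS : e ∈ S
  · simp only [Set.mem_sdiff, heS, not_true, false_and, true_and, false_or, if_true,
      and_iff_right_of_imp fun _ => hS heS]
  · simp only [Set.mem_sdiff, heS, not_false_eq_true, and_true, false_and, or_false, if_false]

lemma outdegRev_eq_one_iff (hS : S ⊆ T) :
    D.outdegRev T S v = 1 ↔ ∃! e, e ∈ T ∧ D.tailRev S e = v := by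
  rw [outdegRev_eq_card hS, Nat.card_eq_fintype_card, Fintype.card_subtype,
    Fintype.existsUnique_iff_card_one]

lemma outdegRev_eq_zero_iff (hS : S ⊆ T) :
    D.outdegRev T S v = 0 ↔ ∀ e ∈ T, D.tailRev S e ≠ v := by
  rw [outdegRev_eq_card hS, Finite.card_eq_zero_iff, isEmpty_subtype]
  simp only [not_and]

/-- The edges of `T` pointing away from `r`. -/
def reversedEdges (T : Set D.E) (r : D.V) : Set D.E :=
  {e | e ∈ T ∧ ¬ D.Reach (T \ {e}) (D.last e) r}

lemma reversedEdges_subset : D.reversedEdges T r ⊆ T := fun _ he => he.1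

lemma IsSpanningTree.ncard_reversedEdges_le (hT : D.IsSpanningTree T) :
    (D.reversedEdges T r).ncard ≤ Nat.card D.V - 1 :=
  hT.ncard_eq ▸ Set.ncard_le_ncard reversedEdges_subset

end Orientation

section Uniqueness

variable {T S : Set D.E} {r v : D.V} {e : D.E}

lemma IsOrientedSpanningTreeRev.tailRev_ne_root (hT : D.IsOrientedSpanningTreeRev T S r)
    (he : e ∈ T) : D.tailRev S e ≠ r :=
  (outdegRev_eq_zero_iff hT.2.1).mp hT.2.2.2 e he

lemma IsOrientedSpanningTreeRev.existsUnique_tailRev_eq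
    (hT : D.IsOrientedSpanningTreeRev T S r) (hv : v ≠ r) :
    ∃! e, e ∈ T ∧ D.tailRev S e = v :=
  (outdegRev_eq_one_iff hT.2.1).mp (hT.2.2.1 v hv)

noncomputable def parent (T S : Set D.E) (v : D.V) : D.V :=
  if h : ∃ e, e ∈ T ∧ D.tailRev S e = v then D.headRev S h.choose else v

lemma IsOrientedSpanningTreeRev.parent_tailRev (hT : D.IsOrientedSpanningTreeRev T S r)
    (he : e ∈ T) : D.parent T S (D.tailRev S e) = D.headRev S e := by
  have hex : ∃ e', e' ∈ T ∧ D.tailRev S e' = D.tailRev S e := ⟨e, he, rfl⟩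
  rw [parent, dif_pos hex,
    (hT.existsUnique_tailRev_eq (hT.tailRev_ne_root he)).unique hex.choose_spec ⟨he, rfl⟩]

lemma IsOrientedSpanningTreeRev.parent_root (hT : D.IsOrientedSpanningTreeRev T S r) :
    D.parent T S r = r :=
  dif_neg fun ⟨_, he, h⟩ => hT.tailRev_ne_root he h

lemma IsOrientedSpanningTreeRev.exists_iterate_parent_iff
    (hT : D.IsOrientedSpanningTreeRev T S r) {t : D.V} (he : e ∈ T) (ht : D.tailRev S e ≠ t) :
    (∃ n, (D.parent T S)^[n] (D.first e) = t) ↔ ∃ n, (D.parent T S)^[n] (D.last e) = t :=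
  (iff_tailRev_headRev_iff fun v => ∃ n, (D.parent T S)^[n] v = t).mp
    (Function.exists_iterate_eq_iff_of_apply_eq (hT.parent_tailRev he) ht)

/-- The vertices whose parent chain passes through the tail of `e` are closed under the other
edges of `T`, and `r` is not among them. -/
lemma IsOrientedSpanningTreeRev.not_reach_tailRev (hT : D.IsOrientedSpanningTreeRev T S r)
    (he : e ∈ T) : ¬ D.Reach (T \ {e}) (D.tailRev S e) r := by
  intro h
  have hne := hT.tailRev_ne_root he
  obtain ⟨n, hn⟩ := (h.iff_of_forall_mem (fun v => ∃ n, (D.parent T S)^[n] v = D.tailRev S e)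
    fun e' he' => hT.exists_iterate_parent_iff he'.1 fun h' => he'.2
      ((hT.existsUnique_tailRev_eq hne).unique ⟨he'.1, h'⟩ ⟨he, rfl⟩)).mp ⟨0, rfl⟩
  exact hne (Function.iterate_fixed hT.parent_root n ▸ hn).symm

lemma IsOrientedSpanningTreeRev.eq_reversedEdges (hT : D.IsOrientedSpanningTreeRev T S r) :
    S = D.reversedEdges T r := by
  ext e
  refine ⟨fun heS => ⟨hT.2.1 heS, ?_⟩, fun ⟨he, hl⟩ => ?_⟩
  · simpa [tailRev, heS] using hT.not_reach_tailRev (hT.2.1 heS)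
  · by_contra heS
    have hf : ¬ D.Reach (T \ {e}) (D.first e) r := by
      simpa [tailRev, heS] using hT.not_reach_tailRev he
    exact hf ((hT.1.reach_first_iff_not_reach_last he).mpr hl)

end Uniqueness

section Existence

variable {T : Set D.E} {r : D.V} {e : D.E}

lemma IsSpanningTree.reach_headRev_reversedEdges (hT : D.IsSpanningTree T) (he : e ∈ T) :
    D.Reach (T \ {e}) (D.headRev (D.reversedEdges T r) e) r := by
  unfold headRev
  split_ifs with h
  · exact (hT.reach_first_iff_not_reach_last he).mpr h.2
  · simpa [reversedEdges, he] using h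

lemma IsSpanningTree.not_reach_tailRev_reversedEdges (hT : D.IsSpanningTree T) (he : e ∈ T) :
    ¬ D.Reach (T \ {e}) (D.tailRev (D.reversedEdges T r) e) r := by
  unfold tailRev
  split_ifs with h
  · exact h.2
  · exact fun hf =>
      (hT.reach_first_iff_not_reach_last he).mp hf (by simpa [reversedEdges, he] using h)

/-- If `e ≠ e'` had the same tail, that tail and both endpoints of `e` would be cut off from `r`
in `T \ {e'}`, so the path from the head of `e'` to `r` would avoid `e` as well, joining the
tail of `e` to `r` in `T \ {e}`. -/
lemma IsSpanningTree.injOn_tailRev_reversedEdges (hT : D.IsSpanningTree T) :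
    Set.InjOn (D.tailRev (D.reversedEdges T r)) T := by
  intro e he e' he' htt
  by_contra hne
  have heW : e ∈ T \ {e'} := ⟨he, hne⟩
  have hfl : ¬ D.Reach (T \ {e'}) (D.first e) r ∧ ¬ D.Reach (T \ {e'}) (D.last e) r := by
    have h := htt ▸ hT.not_reach_tailRev_reversedEdges he'
    rw [← reach_first_iff_reach_last heW, and_self]
    rcases tailRev_eq_or (S := D.reversedEdges T r) (e := e) with h' | h' <;> rw [h'] at h
    exacts [h, by rwa [← reach_first_iff_reach_last heW] at h]
  have hsub : (T \ {e'}) \ {e} ⊆ T \ {e'} := Set.sdiff_subset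
  have h := reach_sdiff_singleton_of_not_reach (mt (Reach.mono hsub) hfl.1)
    (mt (Reach.mono hsub) hfl.2) (hT.reach_headRev_reversedEdges he' (r := r))
  refine hT.not_reach_tailRev_reversedEdges (r := r) he ?_
  rw [htt]
  exact (adj_tailRev_headRev (T := T \ {e}) ⟨he', Ne.symm hne⟩).reach.trans
    (h.mono fun x hx => ⟨hx.1.1, hx.2⟩)

lemma IsSpanningTree.isOrientedSpanningTreeRev_reversedEdges (hT : D.IsSpanningTree T)
    (r : D.V) : D.IsOrientedSpanningTreeRev T (D.reversedEdges T r) r := by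
  have hne : ∀ e ∈ T, D.tailRev (D.reversedEdges T r) e ≠ r := fun e he h =>
    hT.not_reach_tailRev_reversedEdges he (by rw [h]; exact Reach.refl _ _)
  let F : T → {v // v ≠ r} := fun e => ⟨_, hne e e.2⟩
  have hF : Function.Bijective F := by
    refine (Nat.bijective_iff_injective_and_card F).mpr ⟨fun e e' h => Subtype.ext
      (hT.injOn_tailRev_reversedEdges e.2 e'.2 (congrArg Subtype.val h)), ?_⟩
    rw [hT.2]
    simp [Nat.card_eq_fintype_card, Fintype.card_subtype_compl]
  have hS := reversedEdges_subset (T := T) (r := r)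
  refine ⟨hT, hS, fun v hv => (outdegRev_eq_one_iff hS).mpr ?_,
    (outdegRev_eq_zero_iff hS).mpr hne⟩
  obtain ⟨e, he⟩ := hF.2 ⟨v, hv⟩
  exact ⟨e, ⟨e.2, congrArg Subtype.val he⟩, fun e' he' =>
    hT.injOn_tailRev_reversedEdges he'.1 e.2 (he'.2.trans (congrArg Subtype.val he).symm)⟩

theorem isOrientedSpanningTreeRev_iff {S : Set D.E} :
    D.IsOrientedSpanningTreeRev T S r ↔ D.IsSpanningTree T ∧ S = D.reversedEdges T r :=
  ⟨fun h => ⟨h.1, h.eq_reversedEdges⟩,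
    fun ⟨hT, hS⟩ => hS ▸ hT.isOrientedSpanningTreeRev_reversedEdges r⟩

lemma isKSpanningTree_iff {k : ℕ} :
    D.IsKSpanningTree T r k ↔ D.IsSpanningTree T ∧ (D.reversedEdges T r).ncard = k := by
  simp only [IsKSpanningTree, isOrientedSpanningTreeRev_iff, Nat.card_coe_set_eq]
  constructor
  · rintro ⟨S, rfl, hT, rfl⟩; exact ⟨hT, rfl⟩
  · rintro ⟨hT, rfl⟩; exact ⟨_, rfl, hT, rfl⟩

end Existence

section ContractTrees

variable {E' T W : Set D.E} {a b r : D.V}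

def contractEdges (E' W : Set D.E) : Set (D.contract E').E := {e | e.1 ∈ W}

lemma reach_contract_iff :
    (D.contract E').Reach (D.contractEdges E' W) (D.toContract E' a) (D.toContract E' b) ↔
      D.Reach (W ∪ E') a b := by
  have hE' : E' ⊆ W ∪ E' := Set.subset_union_right
  constructor
  · suffices ∀ x y, (D.contract E').Reach (D.contractEdges E' W) x y →
        ∀ a b, D.toContract E' a = x → D.toContract E' b = y → D.Reach (W ∪ E') a b from
      fun h => this _ _ h a b rfl rfl
    intro x y h
    induction h with
    | refl => exact fun a b ha hb => (toContract_eq_iff.mp (ha.trans hb.symm)).mono hE'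
    | tail _ hadj ih =>
      rintro a b rfl hb
      obtain ⟨e, he, ⟨hf, hl⟩ | ⟨hf, hl⟩⟩ := hadj
      · exact ((ih a _ rfl hf).trans (reach_of_mem (Or.inl he))).trans
          ((toContract_eq_iff.mp (hl.trans hb.symm)).mono hE')
      · exact ((ih a _ rfl hl).trans (reach_of_mem (Or.inl he)).symm).trans
          ((toContract_eq_iff.mp (hf.trans hb.symm)).mono hE')
  · intro h
    induction h with
    | refl => exact Reach.refl _ _
    | @tail m t _ hadj ih =>
      obtain ⟨e, he, hor⟩ := hadj
      by_cases heE : e ∈ E'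
      · rwa [← toContract_eq_iff.mpr (Adj.reach ⟨e, heE, hor⟩)]
      · refine ih.trans (Adj.reach ⟨⟨e, heE⟩, he.resolve_right heE, ?_⟩)
        rcases hor with ⟨rfl, rfl⟩ | ⟨rfl, rfl⟩
        exacts [Or.inl ⟨rfl, rfl⟩, Or.inr ⟨rfl, rfl⟩]

lemma ncard_contractEdges : (D.contractEdges E' W).ncard = (W \ E').ncard := by
  have : D.contractEdges E' W = Subtype.val ⁻¹' (W \ E') := by
    ext e
    exact (and_iff_left e.2).symm
  rw [this]
  exact Set.ncard_preimage_of_injective_subset_range Subtype.val_injective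
    fun e he => ⟨⟨e, he.2⟩, rfl⟩

lemma isSpanningTree_contract_iff [Nonempty D.V] (hE : D.CycleFree E') (hET : E' ⊆ T) :
    (D.contract E').IsSpanningTree (D.contractEdges E' T) ↔ D.IsSpanningTree T := by
  have hreach : (∀ x y, (D.contract E').Reach (D.contractEdges E' T) x y) ↔
      ∀ a b, D.Reach T a b := by
    rw [(toContract_surjective E').forall₂]
    simp only [reach_contract_iff, Set.union_eq_self_of_subset_right hET]
  have hcard : Nat.card (D.contractEdges E' T) = T.ncard - E'.ncard := by
    rw [Nat.card_coe_set_eq, ncard_contractEdges, Set.ncard_sdiff hET]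
  have hV := hE.card_contract_add_ncard
  have hpos : 0 < Nat.card (D.contract E').V :=
    Nat.card_pos_iff.mpr ⟨⟨D.toContract E' (Classical.arbitrary D.V)⟩, inferInstance⟩
  have hET' := Set.ncard_le_ncard hET
  rw [IsSpanningTree, IsSpanningTree, hreach, hcard, Nat.card_coe_set_eq]
  exact and_congr_right' (by omega)

lemma reversedEdges_contract (hET : E' ⊆ T) :
    (D.contract E').reversedEdges (D.contractEdges E' T) (D.toContract E' r) =
      D.contractEdges E' (D.reversedEdges T r) := by
  ext e
  have hdiff : D.contractEdges E' T \ {e} = D.contractEdges E' (T \ {e.1}) := by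
    ext x
    simp only [contractEdges, Set.mem_sdiff, Set.mem_singleton_iff, Set.mem_ofPred_eq]
    exact and_congr_right' (not_congr Subtype.ext_iff)
  have hunion : T \ {e.1} ∪ E' = T \ {e.1} :=
    Set.union_eq_self_of_subset_right fun x hx => ⟨hET hx, fun h => e.2 (h ▸ hx)⟩
  change _ ∧ ¬ (D.contract E').Reach _ (D.toContract E' (D.last e.1)) _ ↔
    e.1 ∈ T ∧ ¬ D.Reach (T \ {e.1}) (D.last e.1) r
  rw [hdiff, reach_contract_iff, hunion]
  rfl

lemma isKSpanningTree_contract_zero_iff [Nonempty D.V] (hE : D.CycleFree E') (hET : E' ⊆ T) :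
    (D.contract E').IsKSpanningTree (D.contractEdges E' T) (D.toContract E' r) 0 ↔
      D.IsSpanningTree T ∧ D.reversedEdges T r ⊆ E' := by
  rw [isKSpanningTree_iff, isSpanningTree_contract_iff hE hET, reversedEdges_contract hET,
    ncard_contractEdges, Set.ncard_eq_zero, Set.sdiff_eq_empty]

def contractEdgesEquiv (E' : Set D.E) : {T : Set D.E // E' ⊆ T} ≃ Set (D.contract E').E where
  toFun T := D.contractEdges E' T
  invFun T := ⟨E' ∪ Subtype.val '' T, Set.subset_union_left⟩
  left_inv T := by
    refine Subtype.ext (Set.ext fun x => ⟨?_, fun hx => ?_⟩)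
    · rintro (hx | ⟨y, hy, rfl⟩)
      exacts [T.2 hx, hy]
    · by_cases hxE : x ∈ E'
      exacts [Or.inl hxE, Or.inr ⟨⟨x, hxE⟩, hx, rfl⟩]
  right_inv T := by
    refine Set.ext fun x => ⟨?_, fun hx => Or.inr ⟨x, hx, rfl⟩⟩
    rintro (hx | ⟨y, hy, hyx⟩)
    exacts [absurd hx x.2, Subtype.ext hyx ▸ hy]

lemma c_zero_contract (hE : D.CycleFree E') (r : D.V) :
    (D.contract E').c 0 (D.toContract E' r) =
      Nat.card {T : Set D.E // E' ⊆ T ∧ D.IsSpanningTree T ∧ D.reversedEdges T r ⊆ E'} := by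
  have : Nonempty D.V := ⟨r⟩
  exact Nat.card_congr <| (Equiv.subtypeEquiv (contractEdgesEquiv E') fun T =>
    (isKSpanningTree_contract_zero_iff hE T.2).symm).symm.trans
    (Equiv.subtypeSubtypeEquivSubtypeInter _ _)

end ContractTrees

section Counting

noncomputable def spanningTrees (D : Multidigraph) : Finset (Set D.E) := {T | D.IsSpanningTree T}

lemma mem_spanningTrees {T : Set D.E} : T ∈ D.spanningTrees ↔ D.IsSpanningTree T := by
  simp [spanningTrees]

lemma c_eq_sum (k : ℕ) (r : D.V) :
    D.c k r = ∑ T ∈ D.spanningTrees, if (D.reversedEdges T r).ncard = k then 1 else 0 := by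
  simp only [c, isKSpanningTree_iff, Nat.card_subtype_eq_sum_ite, ite_and, spanningTrees,
    Finset.sum_filter]

/-- Both sides count the pairs `(T, E')` of a spanning tree `T` and a set `E'` of `j` edges with
`reversedEdges T r ⊆ E' ⊆ T`. -/
lemma sum_c_zero_contract (r : D.V) (j : ℕ) :
    ∑ E' : Set D.E, (if D.CycleFree E' ∧ Nat.card E' = j then
        (D.contract E').c 0 (D.toContract E' r) else 0) =
      ∑ T ∈ D.spanningTrees, if (D.reversedEdges T r).ncard ≤ j then
        (Nat.card D.V - 1 - (D.reversedEdges T r).ncard).choose (j - (D.reversedEdges T r).ncard)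
        else 0 := by
  have hE' : ∀ E' : Set D.E, (if D.CycleFree E' ∧ Nat.card E' = j then
      (D.contract E').c 0 (D.toContract E' r) else 0) = ∑ T : Set D.E, if D.IsSpanningTree T then
        (if D.reversedEdges T r ⊆ E' ∧ E' ⊆ T ∧ E'.ncard = j then 1 else 0) else 0 := by
    intro E'
    simp only [← ite_and]
    split_ifs with h
    · rw [c_zero_contract h.1, Nat.card_subtype_eq_sum_ite]
      refine Finset.sum_congr rfl fun T _ => if_congr ?_ rfl rfl
      rw [← Nat.card_coe_set_eq, h.2]
      tauto
    · refine (Finset.sum_eq_zero fun T _ => if_neg ?_).symm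
      rintro ⟨hT, -, hE'T, hj⟩
      exact h ⟨hT.cycleFree.mono hE'T, Nat.card_coe_set_eq E' ▸ hj⟩
  rw [Finset.sum_congr rfl fun E' _ => hE' E', Finset.sum_comm, spanningTrees, Finset.sum_filter]
  refine Finset.sum_congr rfl fun T _ => ?_
  by_cases hT : D.IsSpanningTree T
  · simp only [hT, if_true]
    rw [← Nat.card_subtype_eq_sum_ite, ← hT.ncard_eq,
      ← Set.ncard_setOf_between_ncard_eq T.toFinite reversedEdges_subset j]
    exact Nat.card_coe_set_eq _
  · simp only [hT, if_false, Finset.sum_const_zero]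

end Counting

end Multidigraph

theorem stmt3_general (D : Multidigraph) (r : D.V) (k : ℕ) :
    (D.c k r : ℤ) =
      ∑ i ∈ Finset.range (k + 1), (-1 : ℤ) ^ i *
        ∑ E' : Set D.E,
          if D.CycleFree E' ∧ Nat.card E' = k - i then
            ((Nat.card D.V - 1 - (k - i)).choose i : ℤ) *
              ((D.contract E').c 0
                (Quotient.mk (Relation.EqvGen.setoid (D.contractRel E')) r) : ℤ)
          else 0 := by
  calc (D.c k r : ℤ)
      = ∑ T ∈ D.spanningTrees, ∑ i ∈ Finset.range (k + 1), (-1 : ℤ) ^ i *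
          ((Nat.card D.V - 1 - (k - i)).choose i : ℤ) *
          (if (D.reversedEdges T r).ncard ≤ k - i then
            ((Nat.card D.V - 1 - (D.reversedEdges T r).ncard).choose
              (k - i - (D.reversedEdges T r).ncard) : ℤ) else 0) := by
        rw [Multidigraph.c_eq_sum, Nat.cast_sum]
        refine Finset.sum_congr rfl fun T hT => ?_
        rw [Int.alternating_sum_choose_mul_choose
          (Multidigraph.mem_spanningTrees.mp hT).ncard_reversedEdges_le]
        push_cast
        rfl
    _ = _ := by
        rw [Finset.sum_comm]
        refine Finset.sum_congr rfl fun i _ => ?_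
        have h := congrArg (Nat.cast : ℕ → ℤ) (D.sum_c_zero_contract r (k - i))
        push_cast at h
        simp only [← mul_ite_zero, ← Finset.mul_sum]
        rw [← mul_assoc, ← h]

/-- `c_k(D,r) = ∑_{i=0}^{k} (-1)^i ∑_{cycle-free E', |E'|=k-i}
binom(|V(D)|-1-(k-i), i) · c_0(D/E', r)`. -/
theorem stmt3 (D : Multidigraph) (hD : D.Eulerian) (r : D.V) (k : ℕ) :
    (D.c k r : ℤ) =
      ∑ i ∈ Finset.range (k + 1), (-1 : ℤ) ^ i *
        ∑ E' : Set D.E,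
          if D.CycleFree E' ∧ Nat.card E' = k - i then
            ((Nat.card D.V - 1 - (k - i)).choose i : ℤ) *
              ((D.contract E').c 0
                (Quotient.mk (Relation.EqvGen.setoid (D.contractRel E')) r) : ℤ)
          else 0 :=
  stmt3_general D r k
end
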